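/- arXiv:1702.02123 — 4 statements merged into one kernel-verified Lean document; each statement's English description precedes it below -/
import Mathlib

section
/- For real p,q with p+q=1 and p,q ∈ [0,1], the two-qubit state ρ = (1/4)[I₄ + pμ(x⃗·σ⃗)⊗I₂ + qμ I₂⊗(x⃗·σ⃗) + pqμ Σᵢ σᵢ⊗σᵢ], where μ = 1/(1−pq) and x⃗ ∈ ℝ³, has a positive partial transpose whenever ‖x⃗‖² ≤ 1 − 4p²q². -/
open Matrix
open scoped Matrix Kronecker BigOperators ComplexOrder

/-- The Pauli matrices σ₁, σ₂, σ₃. -/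
noncomputable def pauli : Fin 3 → Matrix (Fin 2) (Fin 2) ℂ
  | 0 => !![0, 1; 1, 0]
  | 1 => !![0, -Complex.I; Complex.I, 0]
  | 2 => !![1, 0; 0, -1]

/-- Canonical (Bloch/Fano) form {a⃗, b⃗, M} of a two-qubit operator:
(1/4)[I₄ + Σᵢ aᵢσᵢ⊗I₂ + Σᵢ bᵢ I₂⊗σᵢ + Σᵢⱼ Mᵢⱼ σᵢ⊗σⱼ]. -/
noncomputable def canon (a b : Fin 3 → ℝ) (M : Matrix (Fin 3) (Fin 3) ℝ) :
    Matrix (Fin 2 × Fin 2) (Fin 2 × Fin 2) ℂ :=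
  (1 / 4 : ℂ) • ((1 : Matrix (Fin 2 × Fin 2) (Fin 2 × Fin 2) ℂ)
    + ∑ i : Fin 3, (a i : ℂ) • (pauli i ⊗ₖ (1 : Matrix (Fin 2) (Fin 2) ℂ))
    + ∑ i : Fin 3, (b i : ℂ) • ((1 : Matrix (Fin 2) (Fin 2) ℂ) ⊗ₖ pauli i)
    + ∑ i : Fin 3, ∑ j : Fin 3, (M i j : ℂ) • (pauli i ⊗ₖ pauli j))

/-- Partial transpose on the second qubit. -/
noncomputable def ptB (ρ : Matrix (Fin 2 × Fin 2) (Fin 2 × Fin 2) ℂ) :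
    Matrix (Fin 2 × Fin 2) (Fin 2 × Fin 2) ℂ :=
  fun r s => ρ (r.1, s.2) (s.1, r.2)

/-!
Transposing the second factor turns `Σᵢ σᵢ ⊗ σᵢ` into `2 |Ω⟩⟨Ω| - 1` with `Ω = |00⟩ + |11⟩`.
Viewing a vector of `ℂ² ⊗ ℂ²` as a `2 × 2` matrix `c • 1 + Σₖ (uₖ + i wₖ) • σₖ`, the quadratic
form of the partially transposed state becomes a real quadratic form in `c`, `u`, `w` whose only
mixed terms are `c • (x ⬝ u)`, `c • (x ⬝ w)` and the triple product `x ⬝ (u ⨯ w)`.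
Completing the square in `c` and bounding the triple product through the components `x ⨯ u`,
`x ⨯ w` orthogonal to `x` shows that this form is nonnegative once `‖x‖² ≤ 1 - 4p²q²`.
Over `ℂ` a nonnegative quadratic form already forces the matrix to be Hermitian.
-/

theorem Matrix.PosSemidef.of_dotProduct_mulVec_nonneg_complex {n : Type*} [Fintype n]
    [DecidableEq n] {A : Matrix n n ℂ} (hA : ∀ v : n → ℂ, 0 ≤ star v ⬝ᵥ (A *ᵥ v)) :
    A.PosSemidef := by
  rw [← Matrix.isPositive_toEuclideanLin_iff, LinearMap.isPositive_iff_complex]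
  intro v
  obtain ⟨hre, him⟩ := Complex.nonneg_iff.mp (hA v)
  rw [EuclideanSpace.inner_eq_star_dotProduct, Matrix.ofLp_toLpLin, Matrix.toLin'_apply,
    dotProduct_comm, star_dotProduct]
  exact ⟨Complex.ext rfl (by simp [← him]), by simpa using hre⟩

theorem dotProduct_self_nonneg_real {n : Type*} [Fintype n] (v : n → ℝ) : 0 ≤ v ⬝ᵥ v := by
  simpa using dotProduct_star_self_nonneg v

section CrossProduct

variable (a b y u w : Fin 3 → ℝ)

theorem cross_dot_cross_self : a ⨯₃ b ⬝ᵥ a ⨯₃ b = a ⬝ᵥ a * b ⬝ᵥ b - (a ⬝ᵥ b) ^ 2 := by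
  rw [cross_dot_cross, dotProduct_comm b a]; ring

theorem sq_dotProduct_le : (a ⬝ᵥ b) ^ 2 ≤ a ⬝ᵥ a * b ⬝ᵥ b := by
  linarith [cross_dot_cross_self a b, dotProduct_self_nonneg_real (a ⨯₃ b)]

theorem cross_dot_cross_self_le : a ⨯₃ b ⬝ᵥ a ⨯₃ b ≤ a ⬝ᵥ a * b ⬝ᵥ b := by
  linarith [cross_dot_cross_self a b, sq_nonneg (a ⬝ᵥ b)]

theorem dot_cross_cross_cross : y ⬝ᵥ (y ⨯₃ u) ⨯₃ (y ⨯₃ w) = y ⬝ᵥ y * y ⬝ᵥ u ⨯₃ w := by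
  simp only [cross_apply, vec3_dotProduct, cons_val]
  ring

variable {a b y u w}

/-- Multiplied by `y ⬝ᵥ y`, the form splits into the squares `(y ⬝ᵥ u) ^ 2`, `(y ⬝ᵥ w) ^ 2` and a
form in `y ⨯₃ u`, `y ⨯₃ w`, whose triple-product term is dominated via `|y ⬝ᵥ A ⨯₃ B| ≤ ‖y‖‖A‖‖B‖`. -/
theorem triple_product_form_nonneg {K k : ℝ} (hy : y ⬝ᵥ y ≤ K) (hk : k ^ 2 * y ⬝ᵥ y ≤ K ^ 2) :
    0 ≤ K * (u ⬝ᵥ u + w ⬝ᵥ w) - (y ⬝ᵥ u) ^ 2 - (y ⬝ᵥ w) ^ 2 + 2 * k * y ⬝ᵥ u ⨯₃ w := by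
  have hy0 := dotProduct_self_nonneg_real y
  have hK : 0 ≤ K := hy0.trans hy
  rcases hy0.eq_or_lt with hy0 | hpos
  · obtain rfl : y = 0 := dotProduct_self_eq_zero.mp hy0.symm
    simp only [zero_dotProduct]
    nlinarith [dotProduct_self_nonneg_real u, dotProduct_self_nonneg_real w]
  set A := y ⨯₃ u
  set B := y ⨯₃ w
  have hA := dotProduct_self_nonneg_real A
  have hB := dotProduct_self_nonneg_real B
  have hAB : 0 ≤ K * (A ⬝ᵥ A + B ⬝ᵥ B) + 2 * k * y ⬝ᵥ A ⨯₃ B := by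
    have hsq : (2 * k * y ⬝ᵥ A ⨯₃ B) ^ 2 ≤ (K * (A ⬝ᵥ A + B ⬝ᵥ B)) ^ 2 :=
      calc (2 * k * y ⬝ᵥ A ⨯₃ B) ^ 2 = 4 * k ^ 2 * (y ⬝ᵥ A ⨯₃ B) ^ 2 := by ring
        _ ≤ 4 * k ^ 2 * (y ⬝ᵥ y * (A ⬝ᵥ A * B ⬝ᵥ B)) := by
          gcongr
          exact (sq_dotProduct_le y _).trans
            (mul_le_mul_of_nonneg_left (cross_dot_cross_self_le A B) hy0)
        _ ≤ 4 * K ^ 2 * (A ⬝ᵥ A * B ⬝ᵥ B) := by nlinarith [mul_nonneg hA hB]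
        _ ≤ (K * (A ⬝ᵥ A + B ⬝ᵥ B)) ^ 2 := by nlinarith [sq_nonneg (A ⬝ᵥ A - B ⬝ᵥ B)]
    linarith [neg_abs_le (2 * k * y ⬝ᵥ A ⨯₃ B), abs_le_of_sq_le_sq' hsq (by positivity)]
  have key : y ⬝ᵥ y * (K * (u ⬝ᵥ u + w ⬝ᵥ w) - (y ⬝ᵥ u) ^ 2 - (y ⬝ᵥ w) ^ 2 + 2 * k * y ⬝ᵥ u ⨯₃ w)
      = (K - y ⬝ᵥ y) * ((y ⬝ᵥ u) ^ 2 + (y ⬝ᵥ w) ^ 2)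
        + (K * (A ⬝ᵥ A + B ⬝ᵥ B) + 2 * k * y ⬝ᵥ A ⨯₃ B) := by
    rw [dot_cross_cross_cross, cross_dot_cross_self, cross_dot_cross_self]; ring
  refine (mul_nonneg_iff_of_pos_left hpos).mp ?_
  rw [key]
  have := sub_nonneg.mpr hy
  positivity

theorem bloch_form_nonneg {S D k c₁ c₂ : ℝ} (hS : 0 < S) (hy : y ⬝ᵥ y ≤ S * D)
    (hk : k ^ 2 * y ⬝ᵥ y ≤ D ^ 2) :
    0 ≤ S * (c₁ ^ 2 + c₂ ^ 2) + D * (u ⬝ᵥ u + w ⬝ᵥ w) + 2 * (c₁ * y ⬝ᵥ u + c₂ * y ⬝ᵥ w)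
      + 2 * (k • y) ⬝ᵥ u ⨯₃ w := by
  rw [smul_dotProduct, smul_eq_mul, ← mul_assoc]
  have hG := triple_product_form_nonneg (k := S * k) (u := u) (w := w) hy
    (by nlinarith [mul_le_mul_of_nonneg_left hk (sq_nonneg S)])
  refine (mul_nonneg_iff_of_pos_left hS).mp ?_
  have key : S * (S * (c₁ ^ 2 + c₂ ^ 2) + D * (u ⬝ᵥ u + w ⬝ᵥ w) + 2 * (c₁ * y ⬝ᵥ u + c₂ * y ⬝ᵥ w)
      + 2 * k * y ⬝ᵥ u ⨯₃ w) = (S * c₁ + y ⬝ᵥ u) ^ 2 + (S * c₂ + y ⬝ᵥ w) ^ 2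
        + (S * D * (u ⬝ᵥ u + w ⬝ᵥ w) - (y ⬝ᵥ u) ^ 2 - (y ⬝ᵥ w) ^ 2
          + 2 * (S * k) * y ⬝ᵥ u ⨯₃ w) := by
    ring
  rw [key]
  positivity

end CrossProduct

/-- With `V i j = v (i, j)`, the coefficients in
`V = identityCoeff v • 1 + Σₖ pauliCoeff v k • pauli k`, read off by trace-orthogonality. -/
noncomputable def identityCoeff (v : Fin 2 × Fin 2 → ℂ) : ℂ :=
  (Matrix.of (Function.curry v)).trace / 2

noncomputable def pauliCoeff (v : Fin 2 × Fin 2 → ℂ) (k : Fin 3) : ℂ :=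
  (pauli k * Matrix.of (Function.curry v)).trace / 2

theorem dotProduct_ptB_canon_mulVec (a b : Fin 3 → ℝ) (t : ℝ) (v : Fin 2 × Fin 2 → ℂ) :
    star v ⬝ᵥ (ptB (canon a b (t • 1)) *ᵥ v) =
      (((1 + 3 * t) * ((identityCoeff v).re ^ 2 + (identityCoeff v).im ^ 2)
        + (1 - t) * ((Complex.re ∘ pauliCoeff v) ⬝ᵥ (Complex.re ∘ pauliCoeff v)
          + (Complex.im ∘ pauliCoeff v) ⬝ᵥ (Complex.im ∘ pauliCoeff v))
        + 2 * ((identityCoeff v).re * (a + b) ⬝ᵥ (Complex.re ∘ pauliCoeff v)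
          + (identityCoeff v).im * (a + b) ⬝ᵥ (Complex.im ∘ pauliCoeff v))
        + 2 * (a - b) ⬝ᵥ (Complex.re ∘ pauliCoeff v) ⨯₃ (Complex.im ∘ pauliCoeff v)) / 2 : ℝ) := by
  simp only [ptB, canon, identityCoeff, pauliCoeff, dotProduct, mulVec, Fintype.sum_prod_type,
    Fin.sum_univ_two, Fin.sum_univ_three, trace, diag, mul_apply, of_apply, Function.curry,
    Function.comp_apply, cross_apply, Matrix.smul_apply, Matrix.add_apply, one_apply,
    kroneckerMap_apply, Pi.star_apply, pauli, Pi.add_apply, Pi.sub_apply, smul_eq_mul,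
    Prod.mk.injEq, Fin.reduceEq, and_self, and_false, false_and, if_true, if_false, cons_val,
    Fin.isValue, mul_one, mul_zero, one_mul, zero_mul, add_zero, zero_add, Complex.ofReal_zero]
  apply Complex.ext <;>
  simp only [Complex.ofReal_re, Complex.ofReal_im, Complex.add_re, Complex.add_im,
    Complex.mul_re, Complex.mul_im, Complex.div_ofNat_re, Complex.div_ofNat_im, Complex.star_def,
    Complex.conj_re, Complex.conj_im, Complex.I_re, Complex.I_im, Complex.neg_re, Complex.neg_im,
    Complex.one_re, Complex.one_im] <;>
  ring

theorem local_output_ppt_general (p q : ℝ) (hp : 0 ≤ p) (hq : 0 ≤ q)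
    (hpq : p + q = 1) (x : Fin 3 → ℝ)
    (hx : ∑ i, x i ^ 2 ≤ 1 - 4 * p ^ 2 * q ^ 2) :
    (ptB (canon (fun i => p * (1 / (1 - p * q)) * x i)
        (fun i => q * (1 / (1 - p * q)) * x i)
        ((p * q * (1 / (1 - p * q))) • (1 : Matrix (Fin 3) (Fin 3) ℝ)))).PosSemidef := by
  set μ := 1 / (1 - p * q)
  have hpq0 : 0 ≤ p * q := mul_nonneg hp hq
  have hpq_le : p * q ≤ 1 / 4 := by nlinarith [sq_nonneg (p - q)]
  have hμ : μ * (1 - p * q) = 1 := one_div_mul_cancel (by linarith)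
  have hμ0 : 0 < μ := one_div_pos.mpr (by linarith)
  have hS : 1 + 3 * (p * q * μ) = μ * (1 + 2 * (p * q)) := by linear_combination -hμ
  have hD : 1 - p * q * μ = μ * (1 - 2 * (p * q)) := by linear_combination -hμ
  have hxx : x ⬝ᵥ x ≤ 1 - 4 * (p * q) ^ 2 := by
    simp only [dotProduct, ← sq]; linarith
  have hsum : (fun i => p * μ * x i) + (fun i => q * μ * x i) = μ • x := by
    ext i; simp only [Pi.add_apply, Pi.smul_apply, smul_eq_mul]; linear_combination μ * x i * hpq
  have hdiff : (fun i => p * μ * x i) - (fun i => q * μ * x i) = (p - q) • μ • x := by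
    ext i; simp only [Pi.sub_apply, Pi.smul_apply, smul_eq_mul]; ring
  refine Matrix.PosSemidef.of_dotProduct_mulVec_nonneg_complex fun v => ?_
  rw [dotProduct_ptB_canon_mulVec, Complex.zero_le_real, hsum, hdiff]
  refine div_nonneg (bloch_form_nonneg ?_ ?_ ?_) zero_le_two
  · rw [hS]; positivity
  · rw [hS, hD, smul_dotProduct, dotProduct_smul, smul_eq_mul, smul_eq_mul]
    nlinarith [mul_le_mul_of_nonneg_left hxx (sq_nonneg μ)]
  · have hpq2 : (p - q) ^ 2 = 1 - 4 * (p * q) := by linear_combination (p + q + 1) * hpq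
    rw [hD, smul_dotProduct, dotProduct_smul, smul_eq_mul, smul_eq_mul, hpq2]
    have h : (1 - 4 * (p * q)) * x ⬝ᵥ x ≤ (1 - 2 * (p * q)) ^ 2 := by
      nlinarith [mul_le_mul_of_nonneg_left hxx (by linarith : 0 ≤ 1 - 4 * (p * q)),
        mul_nonneg (sq_nonneg (p * q)) (by linarith : 0 ≤ 1 - 2 * (p * q))]
    nlinarith [mul_le_mul_of_nonneg_left h (sq_nonneg μ)]

/-- Local output states of the asymmetric local Pauli cloner are PPT whenever
‖x⃗‖² ≤ 1 − 4p²q². -/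
theorem local_output_ppt (p q : ℝ) (hp : 0 ≤ p) (hp1 : p ≤ 1) (hq : 0 ≤ q) (hq1 : q ≤ 1)
    (hpq : p + q = 1) (x : Fin 3 → ℝ)
    (hx : ∑ i, x i ^ 2 ≤ 1 - 4 * p ^ 2 * q ^ 2) :
    (ptB (canon (fun i => p * (1 / (1 - p * q)) * x i)
        (fun i => q * (1 / (1 - p * q)) * x i)
        ((p * q * (1 / (1 - p * q))) • (1 : Matrix (Fin 3) (Fin 3) ℝ)))).PosSemidef :=
  local_output_ppt_general p q hp hq hpq x hx
end

section
/- For p,q ∈ (0,1) with p+q=1, the two-qubit state ρ = (1/4)[I₄ + pμ(x⃗·σ⃗)⊗I₂ + qμ I₂⊗(x⃗·σ⃗) + pqμ Σᵢ σᵢ⊗σᵢ] with μ = 1/(1−pq) has geometric discord D_G(ρ) = p²q²/(2(1−pq)²); in particular D_G(ρ) = 0 if and only if p = 0 or q = 0. -/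
open Matrix
open scoped Matrix Kronecker BigOperators ComplexOrder

/-- Largest eigenvalue of a real 3×3 (symmetric) matrix, as the supremum of its
spectrum. -/
noncomputable def lamMax (Ω : Matrix (Fin 3) (Fin 3) ℝ) : ℝ := sSup (spectrum ℝ Ω)

/-- Geometric discord of the two-qubit state {a⃗, b⃗, M}, via the closed formula
D_G = (1/4)(‖a⃗‖² + Tr(MᵀM) − λ_max(a⃗a⃗ᵀ + MMᵀ)). -/
noncomputable def geomDiscord (a : Fin 3 → ℝ) (M : Matrix (Fin 3) (Fin 3) ℝ) : ℝ :=
  (1 / 4) * (∑ i, a i ^ 2 + (Mᵀ * M).trace - lamMax (vecMulVec a a + M * Mᵀ))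


lemma key_mulVec (a : Fin 3 → ℝ) (c : ℝ) :
    (vecMulVec a a + c • (1 : Matrix (Fin 3) (Fin 3) ℝ)) *ᵥ a
      = ((∑ i, a i ^ 2) + c) • a := by
  funext i
  fin_cases i <;>
    simp [Matrix.mulVec, dotProduct, Fin.sum_univ_three, Matrix.vecMulVec_apply,
      Matrix.one_apply] <;> ring

lemma isGreatest_spec (a : Fin 3 → ℝ) (c : ℝ) (hc : 0 ≤ c) :
    IsGreatest (spectrum ℝ (vecMulVec a a + c • (1 : Matrix (Fin 3) (Fin 3) ℝ)))
      ((∑ i, a i ^ 2) + c) := by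
  constructor
  · rw [spectrum.mem_iff, Matrix.isUnit_iff_isUnit_det, isUnit_iff_ne_zero, not_not,
      ← Matrix.exists_mulVec_eq_zero_iff]
    by_cases ha : a = 0
    · refine ⟨fun _ => 1, by intro h; simpa using congrFun h 0, ?_⟩
      subst ha
      funext i
      fin_cases i <;>
        simp [Algebra.algebraMap_eq_smul_one, Matrix.mulVec, dotProduct,
          Fin.sum_univ_three, Matrix.vecMulVec_apply, Matrix.one_apply,
          Matrix.sub_apply, Matrix.add_apply, Matrix.smul_apply]
    · refine ⟨a, ha, ?_⟩
      rw [Algebra.algebraMap_eq_smul_one, Matrix.sub_mulVec, key_mulVec,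
        Matrix.smul_mulVec, Matrix.one_mulVec, sub_self]
  · intro r hr
    rw [spectrum.mem_iff, Matrix.isUnit_iff_isUnit_det, isUnit_iff_ne_zero, not_not,
      ← Matrix.exists_mulVec_eq_zero_iff] at hr
    obtain ⟨v, hv, h⟩ := hr
    rw [Algebra.algebraMap_eq_smul_one] at h
    have e0 := congrFun h 0
    have e1 := congrFun h 1
    have e2 := congrFun h 2
    simp [Matrix.sub_mulVec, Matrix.add_mulVec, Matrix.smul_mulVec,
      Matrix.one_mulVec, Matrix.mulVec, dotProduct, Fin.sum_univ_three,
      Matrix.vecMulVec_apply, Matrix.sub_apply, Matrix.add_apply,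
      Matrix.smul_apply, Matrix.one_apply] at e0 e1 e2
    have hn : 0 < v 0 ^ 2 + v 1 ^ 2 + v 2 ^ 2 := by
      obtain ⟨i, hi⟩ := Function.ne_iff.mp hv
      simp only [Pi.zero_apply] at hi
      have h2 : 0 < v i ^ 2 := lt_of_le_of_ne (sq_nonneg _) (Ne.symm (pow_ne_zero 2 hi))
      have h3 : v i ^ 2 ≤ ∑ j, v j ^ 2 :=
        Finset.single_le_sum (fun j _ => sq_nonneg (v j)) (Finset.mem_univ i)
      rw [Fin.sum_univ_three] at h3
      linarith
    rw [Fin.sum_univ_three]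
    have hsum : r * (v 0 ^ 2 + v 1 ^ 2 + v 2 ^ 2)
        = (a 0 * v 0 + a 1 * v 1 + a 2 * v 2) ^ 2
          + c * (v 0 ^ 2 + v 1 ^ 2 + v 2 ^ 2) := by
      linear_combination v 0 * e0 + v 1 * e1 + v 2 * e2
    have hcs : (a 0 * v 0 + a 1 * v 1 + a 2 * v 2) ^ 2
        ≤ (a 0 ^ 2 + a 1 ^ 2 + a 2 ^ 2) * (v 0 ^ 2 + v 1 ^ 2 + v 2 ^ 2) := by
      nlinarith [sq_nonneg (a 0 * v 1 - a 1 * v 0), sq_nonneg (a 0 * v 2 - a 2 * v 0),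
        sq_nonneg (a 1 * v 2 - a 2 * v 1)]
    nlinarith [hsum, hcs, hn]


lemma lamMax_eq (a : Fin 3 → ℝ) (c : ℝ) (hc : 0 ≤ c) :
    lamMax (vecMulVec a a + c • (1 : Matrix (Fin 3) (Fin 3) ℝ)) = (∑ i, a i ^ 2) + c :=
  (isGreatest_spec a c hc).csSup_eq

/-- The local output state of the asymmetric local cloner has geometric discord
p²q²/(2(1−pq)²); in particular it vanishes iff p = 0 or q = 0. -/
theorem geomDiscord_local_output (p q : ℝ) (hp : 0 ≤ p) (hq : 0 ≤ q) (hpq : p + q = 1)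
    (x : Fin 3 → ℝ) (hx : ∑ i, x i ^ 2 ≤ 1) :
    geomDiscord (fun i => p * (1 / (1 - p * q)) * x i)
        ((p * q * (1 / (1 - p * q))) • (1 : Matrix (Fin 3) (Fin 3) ℝ))
      = p ^ 2 * q ^ 2 / (2 * (1 - p * q) ^ 2) ∧
    (geomDiscord (fun i => p * (1 / (1 - p * q)) * x i)
        ((p * q * (1 / (1 - p * q))) • (1 : Matrix (Fin 3) (Fin 3) ℝ)) = 0
      ↔ p = 0 ∨ q = 0) := by
  have hd : (0:ℝ) < 1 - p * q := by nlinarith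
  set k : ℝ := p * q * (1 / (1 - p * q)) with hk
  have hMM : (k • (1 : Matrix (Fin 3) (Fin 3) ℝ)) * (k • 1)ᵀ = (k * k) • 1 := by
    rw [Matrix.transpose_smul, Matrix.transpose_one, Matrix.smul_mul,
      Matrix.mul_smul, one_mul, smul_smul]
  have htr : ((k • (1 : Matrix (Fin 3) (Fin 3) ℝ))ᵀ * (k • 1)).trace = 3 * (k * k) := by
    rw [Matrix.transpose_smul, Matrix.transpose_one, Matrix.smul_mul,
      Matrix.mul_smul, one_mul, smul_smul, Matrix.trace_smul, Matrix.trace_one]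
    simp
    ring
  have hval : geomDiscord (fun i => p * (1 / (1 - p * q)) * x i)
      ((p * q * (1 / (1 - p * q))) • (1 : Matrix (Fin 3) (Fin 3) ℝ))
      = p ^ 2 * q ^ 2 / (2 * (1 - p * q) ^ 2) := by
    rw [geomDiscord, ← hk, hMM, htr, lamMax_eq _ _ (mul_self_nonneg k)]
    rw [hk]
    field_simp
    ring
  refine ⟨hval, ?_⟩
  rw [hval]
  rw [div_eq_zero_iff]
  constructor
  · rintro (h | h)
    · rcases mul_eq_zero.mp h with h' | h'
      · exact Or.inl (pow_eq_zero_iff two_ne_zero |>.mp h')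
      · exact Or.inr (pow_eq_zero_iff two_ne_zero |>.mp h')
    · exfalso
      have : (1 - p * q) ^ 2 ≠ 0 := pow_ne_zero 2 hd.ne'
      exact (mul_ne_zero two_ne_zero this) h
  · rintro (h | h) <;> subst h <;> left <;> ring
end

section
/- For the MEMS subclass II state ρ_MII (with concurrence parameter 0 ≤ r ≤ 2/3), the local output states after local asymmetric cloning, ρ̃₁₃ = {(0,0,pμ/3), (0,0,qμ/3), pqμ I₃} with μ = 1/(1−pq) and p+q=1, p,q ∈ [0,1], have positive partial transpose for all such p. -/
open Matrix
open scoped Matrix Kronecker BigOperators ComplexOrder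

set_option maxHeartbeats 2000000

lemma rankOne (w : (Fin 2 × Fin 2) → ℝ) :
    (Matrix.of fun i j => ((w i * w j : ℝ) : ℂ)).PosSemidef := by
  have h := Matrix.posSemidef_conjTranspose_mul_self
      (Matrix.of fun i j : Fin 2 × Fin 2 => if i = ((0,0) : Fin 2 × Fin 2) then (w j : ℂ) else 0)
  convert h using 1
  ext i j
  simp [Matrix.mul_apply, Fintype.sum_prod_type, Fin.sum_univ_two, Complex.conj_ofReal, mul_comm]

lemma rankOneC (c : ℝ) (hc : 0 ≤ c) (w : (Fin 2 × Fin 2) → ℝ) :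
    (Matrix.of fun i j => ((c * (w i * w j) : ℝ) : ℂ)).PosSemidef := by
  have h := rankOne (fun x => Real.sqrt c * w x)
  convert h using 1
  ext i j
  simp only [Matrix.of_apply]
  norm_cast
  rw [show Real.sqrt c * w i * (Real.sqrt c * w j)
      = (Real.sqrt c * Real.sqrt c) * (w i * w j) by ring, Real.mul_self_sqrt hc]

/-- For the MEMS subclass II resource (concurrence 0 ≤ r ≤ 2/3), the local
outputs ρ̃₁₃ = {(0,0,pμ/3), (0,0,qμ/3), pqμ I₃} of the local asymmetric cloner
are PPT for all p. -/
theorem memsII_local_output_ppt (r p q : ℝ) (hr0 : 0 ≤ r) (hr : r ≤ 2 / 3)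
    (hp : 0 ≤ p) (hp1 : p ≤ 1) (hq : 0 ≤ q) (hq1 : q ≤ 1) (hpq : p + q = 1) :
    (ptB (canon ![0, 0, p * (1 / (1 - p * q)) / 3] ![0, 0, q * (1 / (1 - p * q)) / 3]
        ((p * q * (1 / (1 - p * q))) • (1 : Matrix (Fin 3) (Fin 3) ℝ)))).PosSemidef := by
  have hq' : q = 1 - p := by linarith
  subst hq'
  have ht0 : 0 ≤ p * (1 - p) := by nlinarith
  have ht4 : p * (1 - p) ≤ 1/4 := by nlinarith [sq_nonneg (2*p - 1)]
  have hden : (0:ℝ) < 1 - p * (1 - p) := by linarith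
  have hne : (1 - p * (1 - p)) ≠ 0 := ne_of_gt hden
  set μ : ℝ := 1 / (1 - p * (1 - p)) with hμ
  have hμ0 : 0 ≤ μ := by positivity
  set c0 : ℝ := (1/3 - p * (1 - p)/2) * μ with hc0
  set c1 : ℝ := ((3*p^2 - 2*p + 1)/6) * μ with hc1
  set c2 : ℝ := ((3*p^2 - 4*p + 2)/6) * μ with hc2
  set c3 : ℝ := (1/6 - p * (1 - p)/2) * μ with hc3
  set c4 : ℝ := (p * (1 - p)/2) * μ with hc4
  have h0 : 0 ≤ c0 := by apply mul_nonneg _ hμ0; nlinarith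
  have h1 : 0 ≤ c1 := by apply mul_nonneg _ hμ0; nlinarith [sq_nonneg (3*p - 1)]
  have h2 : 0 ≤ c2 := by apply mul_nonneg _ hμ0; nlinarith [sq_nonneg (3*p - 2)]
  have h3 : 0 ≤ c3 := by apply mul_nonneg _ hμ0; nlinarith
  have h4 : 0 ≤ c4 := by apply mul_nonneg _ hμ0; nlinarith
  have hnec : ((1:ℂ) - (p:ℂ) + (p:ℂ)^2) ≠ 0 := by
    have h' : ((1:ℝ) - p + p^2) ≠ 0 := by intro h; apply hne; linarith [h]; 
    exact_mod_cast fun h => h' (by exact_mod_cast h)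
  have hnecC : ((1:ℂ) - (p:ℂ) * (1 - (p:ℂ))) ≠ 0 := fun h => hnec (by linear_combination h)
  have hnec2 : ((2:ℂ) - (p:ℂ)*2 + (p:ℂ)^2*2) ≠ 0 := by
    intro h; exact hnec (by linear_combination h/2)
  have hnec3 : ((3:ℂ) - (p:ℂ)*3 + (p:ℂ)^2*3) ≠ 0 := by
    intro h; exact hnec (by linear_combination h/3)
  have hnec4 : ((4:ℂ) - (p:ℂ)*4 + (p:ℂ)^2*4) ≠ 0 := by
    intro h; exact hnec (by linear_combination h/4)
  have hnec6 : ((6:ℂ) - (p:ℂ)*6 + (p:ℂ)^2*6) ≠ 0 := by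
    intro h; exact hnec (by linear_combination h/6)
  have hnec12 : ((12:ℂ) - (p:ℂ)*12 + (p:ℂ)^2*12) ≠ 0 := by
    intro h; exact hnec (by linear_combination h/12)
  set w0 : (Fin 2 × Fin 2) → ℝ := fun x => if x = ((0,0) : Fin 2 × Fin 2) then 1 else 0 with hw0
  set w1 : (Fin 2 × Fin 2) → ℝ := fun x => if x = ((0,1) : Fin 2 × Fin 2) then 1 else 0 with hw1
  set w2 : (Fin 2 × Fin 2) → ℝ := fun x => if x = ((1,0) : Fin 2 × Fin 2) then 1 else 0 with hw2
  set w3 : (Fin 2 × Fin 2) → ℝ := fun x => if x = ((1,1) : Fin 2 × Fin 2) then 1 else 0 with hw3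
  set w4 : (Fin 2 × Fin 2) → ℝ := fun x =>
    if x = ((0,0) : Fin 2 × Fin 2) ∨ x = ((1,1) : Fin 2 × Fin 2) then 1 else 0 with hw4
  have key : ptB (canon ![0, 0, p * (1 / (1 - p * (1-p))) / 3] ![0, 0, (1-p) * (1 / (1 - p * (1-p))) / 3]
        ((p * (1-p) * (1 / (1 - p * (1-p)))) • (1 : Matrix (Fin 3) (Fin 3) ℝ)))
      = (Matrix.of fun i j => ((c0 * (w0 i * w0 j) : ℝ) : ℂ))
      + (Matrix.of fun i j => ((c1 * (w1 i * w1 j) : ℝ) : ℂ))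
      + (Matrix.of fun i j => ((c2 * (w2 i * w2 j) : ℝ) : ℂ))
      + (Matrix.of fun i j => ((c3 * (w3 i * w3 j) : ℝ) : ℂ))
      + (Matrix.of fun i j => ((c4 * (w4 i * w4 j) : ℝ) : ℂ)) := by
    ext ⟨i1, i2⟩ ⟨j1, j2⟩
    fin_cases i1 <;> fin_cases i2 <;> fin_cases j1 <;> fin_cases j2 <;>
      simp [ptB, canon, pauli, Fin.sum_univ_three, Matrix.one_apply, hw0, hw1, hw2, hw3, hw4,
        hc0, hc1, hc2, hc3, hc4, hμ, Prod.ext_iff]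
    all_goals (field_simp [hnecC, hnec, hnec2, hnec3, hnec4, hnec6, hnec12]; ring)
  rw [key]
  exact ((((rankOneC c0 h0 w0).add (rankOneC c1 h1 w1)).add (rankOneC c2 h2 w2)).add
    (rankOneC c3 h3 w3)).add (rankOneC c4 h4 w4)
end

section
/- For the MEMS subclass I state ρ_MI with parameter r ∈ [2/3, 1], the two-qubit state {(0,0,(1−r)μp), (0,0,(1−r)μq), pqμ I₃} (local output of the asymmetric cloner, μ = 1/(1−pq), p+q=1, p,q ∈ [0,1]) has positive partial transpose; i.e., the local outputs are always separable. -/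
open Matrix
open scoped Matrix Kronecker BigOperators ComplexOrder

/-! The partial transpose of `{(0,0,α), (0,0,β), m I₃}` is a diagonal matrix with entries
`(1 ± α ± β - m)/4` plus `(m/2) |Φ⟩⟨Φ|` for the unnormalised Bell vector
`Φ = |00⟩ + |11⟩`, so it is positive semidefinite as soon as `m ≥ 0` and `|α ± β| ≤ 1 - m`.
For the cloner outputs `α + β = (1 - r)μ` and `m = pqμ`, and with `μ = 1/(1 - pq)` the
condition becomes `2pq ≤ r`, which holds because `pq ≤ 1/4`. -/

def bellVec : Fin 2 × Fin 2 → ℂ := fun x => if x.1 = x.2 then 1 else 0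

/-- Since `σ₂ᵀ = -σ₂`, the partial transpose turns `∑ᵢ σᵢ ⊗ σᵢ` into
`σ₁ ⊗ σ₁ - σ₂ ⊗ σ₂ + σ₃ ⊗ σ₃ = 2 • vecMulVec bellVec (star bellVec) - 1`. -/
theorem ptB_canon_eq_diagonal_add_bell (α β m : ℝ) :
    ptB (canon ![0, 0, α] ![0, 0, β] (m • 1)) =
      diagonal (fun x : Fin 2 × Fin 2 =>
          (((1 + (-1) ^ (x.1 : ℕ) * α + (-1) ^ (x.2 : ℕ) * β - m) / 4 : ℝ) : ℂ))
        + (m / 2) • vecMulVec bellVec (star bellVec) := by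
  ext ⟨i, j⟩ ⟨k, l⟩
  fin_cases i <;> fin_cases j <;> fin_cases k <;> fin_cases l <;>
    simp [ptB, canon, pauli, bellVec, Fin.sum_univ_three, one_apply, vecMulVec_apply] <;> ring

theorem posSemidef_ptB_canon {α β m : ℝ} (hm : 0 ≤ m) (hsum : |α + β| ≤ 1 - m)
    (hdiff : |α - β| ≤ 1 - m) :
    (ptB (canon ![0, 0, α] ![0, 0, β] (m • 1))).PosSemidef := by
  rw [ptB_canon_eq_diagonal_add_bell]
  refine .add (posSemidef_diagonal_iff.mpr fun ⟨i, j⟩ => ?_)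
    ((posSemidef_vecMulVec_self_star bellVec).smul (by positivity : (0 : ℝ) ≤ m / 2))
  obtain ⟨hsum₁, hsum₂⟩ := abs_le.mp hsum
  obtain ⟨hdiff₁, hdiff₂⟩ := abs_le.mp hdiff
  rw [Complex.zero_le_real]
  fin_cases i <;> fin_cases j <;> norm_num <;> linarith

theorem memsI_local_output_ppt_general (r p q : ℝ) (hr0 : 2 / 3 ≤ r) (hr : r ≤ 1)
    (hp : 0 ≤ p) (hq : 0 ≤ q) (hpq : p + q = 1) :
    (ptB (canon ![0, 0, (1 - r) * (1 / (1 - p * q)) * p]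
        ![0, 0, (1 - r) * (1 / (1 - p * q)) * q]
        ((p * q * (1 / (1 - p * q))) • (1 : Matrix (Fin 3) (Fin 3) ℝ)))).PosSemidef := by
  have hpq_nonneg : 0 ≤ p * q := mul_nonneg hp hq
  have hpq_le : p * q ≤ 1 / 4 := by nlinarith [sq_nonneg (p - q)]
  set μ := 1 / (1 - p * q)
  have hμ_pos : 0 < μ := div_pos one_pos (by linarith)
  have hμ_mul : μ * (1 - p * q) = 1 := one_div_mul_cancel (by linarith)
  have hsum : |(1 - r) * μ * p + (1 - r) * μ * q| = (1 - r) * μ := by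
    rw [← mul_add, hpq, mul_one, abs_of_nonneg (by nlinarith)]
  have hdiff : |(1 - r) * μ * p - (1 - r) * μ * q| ≤ (1 - r) * μ := by
    rw [← mul_sub, abs_mul, abs_of_nonneg (by nlinarith)]
    exact mul_le_of_le_one_right (by nlinarith) (abs_le.mpr ⟨by linarith, by linarith⟩)
  have hbound : (1 - r) * μ + p * q * μ ≤ 1 := by nlinarith
  exact posSemidef_ptB_canon (by positivity) (by linarith) (by linarith)

/-- For the MEMS subclass I resource (2/3 ≤ r ≤ 1), the local outputs
{(0,0,(1−r)μp), (0,0,(1−r)μq), pqμ I₃} of the local asymmetric cloner are PPT,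
i.e. always separable. -/
theorem memsI_local_output_ppt (r p q : ℝ) (hr0 : 2 / 3 ≤ r) (hr : r ≤ 1)
    (hp : 0 ≤ p) (hp1 : p ≤ 1) (hq : 0 ≤ q) (hq1 : q ≤ 1) (hpq : p + q = 1) :
    (ptB (canon ![0, 0, (1 - r) * (1 / (1 - p * q)) * p]
        ![0, 0, (1 - r) * (1 / (1 - p * q)) * q]
        ((p * q * (1 / (1 - p * q))) • (1 : Matrix (Fin 3) (Fin 3) ℝ)))).PosSemidef :=
  memsI_local_output_ppt_general r p q hr0 hr hp hq hpq
end
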